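/- Let N be a closed separable linear sublattice of real Lᵖ(X), 1 ≤ p < ∞. Then there exists e ∈ N with e ≥ 0 such that for every g ∈ N, the support of g is contained in the support of e (up to null sets), i.e. g vanishes a.e. on the set where e = 0. -/

import Mathlib

/-!
Enumerate a countable dense subset `u n` of `N` and put `e = ∑ cₙ |u n|` with weights `cₙ > 0`
small enough for the series to converge; `e` lies in `N` because `N` is a closed sublattice.
Since `0 ≤ cₙ |u n| ≤ e`, every `u n` vanishes a.e. where `e` does, and the functions vanishing
a.e. on a fixed set form a closed subset of `Lᵖ`, which therefore contains `N ⊆ closure {u n}`.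
-/

open MeasureTheory Filter Topology

theorem summable_inv_two_pow_mul_one_add_norm_smul {E : Type*} [NormedAddCommGroup E] [NormedSpace ℝ E]
    [CompleteSpace E] (u : ℕ → E) :
    Summable fun n => (2 ^ n * (1 + ‖u n‖))⁻¹ • u n := by
  refine Summable.of_norm_bounded summable_geometric_two fun n => ?_
  have hpos : 0 < 2 ^ n * (1 + ‖u n‖) := by positivity
  calc ‖(2 ^ n * (1 + ‖u n‖))⁻¹ • u n‖ = (2 ^ n * (1 + ‖u n‖))⁻¹ * ‖u n‖ := by
        rw [norm_smul, Real.norm_of_nonneg (inv_nonneg.mpr hpos.le)]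
    _ ≤ (2 ^ n * (1 + ‖u n‖))⁻¹ * (1 + ‖u n‖) := by gcongr; linarith
    _ = ((2 : ℝ) ^ n)⁻¹ := by field_simp
    _ = (1 / 2) ^ n := by rw [one_div, inv_pow]

namespace MeasureTheory.Lp

variable {X E : Type*} [MeasurableSpace X] {μ : Measure X} {p : ENNReal} [NormedAddCommGroup E]

theorem isClosed_setOf_ae_eq_zero_on [Fact (1 ≤ p)] (S : Set X) :
    IsClosed {g : Lp E p μ | ∀ᵐ x ∂μ, x ∈ S → g x = 0} := by
  refine isClosed_of_closure_subset fun g hg => ?_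
  obtain ⟨v, hv, hvg⟩ := mem_closure_iff_seq_limit.mp hg
  obtain ⟨ns, -, hae⟩ := (tendstoInMeasure_of_tendsto_Lp hvg).exists_seq_tendsto_ae
  have hv_zero : ∀ᵐ x ∂μ, ∀ i, x ∈ S → v (ns i) x = 0 := ae_all_iff.mpr fun i => hv (ns i)
  filter_upwards [hv_zero, hae] with x hvx hx hxS
  refine tendsto_nhds_unique hx ?_
  simpa only [hvx _ hxS] using tendsto_const_nhds

theorem ae_eq_zero_of_nonneg_of_le [PartialOrder E] {f g : Lp E p μ} (hf : 0 ≤ f) (hfg : f ≤ g) :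
    ∀ᵐ x ∂μ, g x = 0 → f x = 0 := by
  filter_upwards [(coeFn_nonneg f).mpr hf, (coeFn_le f g).mpr hfg] with x hf hfg hg
  exact le_antisymm (hg ▸ hfg) hf

theorem coeFn_smul_abs (c : ℝ) (f : Lp ℝ p μ) : ⇑(c • |f|) =ᵐ[μ] fun x => c * |f x| := by
  filter_upwards [coeFn_smul c |f|, coeFn_abs f] with x hsmul habs
  rw [hsmul, Pi.smul_apply, habs, smul_eq_mul]

theorem exists_nonneg_mem_ae_eq_zero_imp [Fact (1 ≤ p)] (N : Submodule ℝ (Lp ℝ p μ))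
    (hclosed : IsClosed (N : Set (Lp ℝ p μ))) (habs : ∀ f ∈ N, |f| ∈ N)
    (u : ℕ → Lp ℝ p μ) (hu : ∀ n, u n ∈ N) :
    ∃ e ∈ N, 0 ≤ e ∧ ∀ n, ∀ᵐ x ∂μ, e x = 0 → u n x = 0 := by
  set c : ℕ → ℝ := fun n => (2 ^ n * (1 + ‖|u n|‖))⁻¹
  have hc : ∀ n, 0 < c n := fun n => by positivity
  set t : ℕ → Lp ℝ p μ := fun n => c n • |u n|
  have ht : ∀ n, 0 ≤ t n := fun n => (coeFn_nonneg _).mp <| by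
    filter_upwards [coeFn_smul_abs (c n) (u n)] with x htx
    exact htx ▸ mul_nonneg (hc n).le (abs_nonneg _)
  have hsum : Summable t := summable_inv_two_pow_mul_one_add_norm_smul fun n => |u n|
  refine ⟨∑' n, t n, tsum_mem hclosed fun n => N.smul_mem _ (habs _ (hu n)),
    tsum_nonneg ht, fun n => ?_⟩
  filter_upwards [ae_eq_zero_of_nonneg_of_le (ht n) (hsum.le_tsum n fun m _ => ht m),
    coeFn_smul_abs (c n) (u n)] with x hx htx he
  simpa [t, htx, (hc n).ne'] using hx he

end MeasureTheory.Lp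

theorem exists_dominating_support
    {X : Type*} [MeasurableSpace X] (μ : Measure X)
    (p : ENNReal) [Fact (1 ≤ p)]
    (N : Submodule ℝ (Lp ℝ p μ)) (hclosed : IsClosed (N : Set (Lp ℝ p μ)))
    (habs : ∀ f ∈ N, |f| ∈ N)
    (hsep : ∃ D : Set (Lp ℝ p μ), D.Countable ∧ D ⊆ N ∧ (N : Set (Lp ℝ p μ)) ⊆ closure D) :
    ∃ e ∈ N, 0 ≤ e ∧ ∀ g ∈ N, ∀ᵐ x ∂μ, e x = 0 → g x = 0 := by
  obtain ⟨D, hDcount, hDN, hdense⟩ := hsep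
  have hD : D.Nonempty := closure_nonempty_iff.mp ⟨0, hdense N.zero_mem⟩
  obtain ⟨u, rfl⟩ := hDcount.exists_eq_range hD
  obtain ⟨e, heN, he, hue⟩ :=
    Lp.exists_nonneg_mem_ae_eq_zero_imp N hclosed habs u fun n => hDN ⟨n, rfl⟩
  refine ⟨e, heN, he, fun g hg => ?_⟩
  have hsub : closure (Set.range u) ⊆ {g : Lp ℝ p μ | ∀ᵐ x ∂μ, x ∈ {x | e x = 0} → g x = 0} :=
    closure_minimal (Set.range_subset_iff.mpr hue) (Lp.isClosed_setOf_ae_eq_zero_on _)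
  exact hsub (hdense hg)
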